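/- arXiv:1102.3290 — 3 statements merged into one kernel-verified Lean document; each statement's English description precedes it below -/
import Mathlib

section
/- For every integer n ≥ 0, ω_3(n,0) − ω_3(n,2) = (1/4)·cos(πn) + (1/2)·cos(πn/2) + 1/4, where cos is the real cosine function. -/
open Real

/-- `ω_d(n,k)`: the number of tuples `(α₀,…,α_d)` of non-negative integers with
`α₁ + 2α₂ + ⋯ + d·α_d = (dn−k)/2` and `α₀ + α₁ + ⋯ + α_d = n`; it is `0` when
`(dn−k)/2` is not a non-negative integer (here encoded by `2·Σ i·αᵢ + k = d·n`). -/
noncomputable def omega (d n k : ℕ) : ℕ :=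
  {α : Fin (d + 1) → ℕ |
    2 * (∑ i : Fin (d + 1), (i : ℕ) * α i) + k = d * n ∧ ∑ i, α i = n}.ncard

/-!
Both sides vanish for odd `n`, and the right-hand side is the indicator of `4 ∣ n`. For
`n = 2t` a tuple counted by `ω₃(2t, 2u)` is determined by `(α₂, α₃)`, which ranges over the
lattice points of a polygon `P_u`. The polygons `P₀` and `P₁` differ only along two edges:
`P₀ \ P₁` is the segment `2α₂ + 3α₃ = 3t` with `⌊t/2⌋ + 1` points and `P₁ \ P₀` the segment
`α₂ + 2α₃ + 1 = t` with `⌊(t+1)/2⌋` points, so `ω₃(2t,0) − ω₃(2t,2)` is `1` for even `t`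
and `0` for odd `t`.
-/

open Finset

theorem omega_eq_zero_of_odd {d n k : ℕ} (h : Odd (d * n + k)) : omega d n k = 0 := by
  have hempty : {α : Fin (d + 1) → ℕ |
      2 * (∑ i : Fin (d + 1), (i : ℕ) * α i) + k = d * n ∧ ∑ i, α i = n} = ∅ :=
    Set.eq_empty_of_forall_notMem fun α ⟨hw, _⟩ =>
      Nat.not_even_iff_odd.2 h ⟨∑ i : Fin (d + 1), (i : ℕ) * α i + k, by omega⟩
  rw [omega, hempty, Set.ncard_empty]

theorem sum_fin_four_val_mul (α : Fin 4 → ℕ) :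
    ∑ i : Fin 4, (i : ℕ) * α i = α 1 + 2 * α 2 + 3 * α 3 := by
  simp [Fin.sum_univ_four]

/-- The pairs `(α₂, α₃)` of the tuples counted by `ω₃(2t, 2u)`; the inequalities say that
`α₁ = 3t − u − 2α₂ − 3α₃` and `α₀ = α₂ + 2α₃ + u − t` are non-negative. -/
def omegaThreePairs (t u : ℕ) : Finset (ℕ × ℕ) :=
  (range (3 * t + 1) ×ˢ range (t + 1)).filter
    fun p => 2 * p.1 + 3 * p.2 + u ≤ 3 * t ∧ t ≤ p.1 + 2 * p.2 + u

theorem omega_three_two_mul (t u : ℕ) :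
    omega 3 (2 * t) (2 * u) = (omegaThreePairs t u).card := by
  rw [omega, ← Set.ncard_coe_finset]
  refine Set.ncard_congr (fun α _ => (α 2, α 3)) ?_ ?_ ?_
  · rintro α ⟨hw, hs⟩
    rw [sum_fin_four_val_mul] at hw
    rw [Fin.sum_univ_four] at hs
    simp only [omegaThreePairs, coe_filter, mem_product, mem_range, Set.mem_ofPred_eq]
    omega
  · rintro α β ⟨hwα, hsα⟩ ⟨hwβ, hsβ⟩ h
    rw [sum_fin_four_val_mul] at hwα hwβ
    rw [Fin.sum_univ_four] at hsα hsβ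
    simp only [Prod.mk.injEq] at h
    funext i
    fin_cases i <;> dsimp <;> omega
  · rintro ⟨b, c⟩ hbc
    simp only [omegaThreePairs, coe_filter, mem_product, mem_range, Set.mem_ofPred_eq] at hbc
    refine ⟨![b + 2 * c + u - t, 3 * t - u - 2 * b - 3 * c, b, c], ⟨?_, ?_⟩, rfl⟩
    · rw [sum_fin_four_val_mul]
      dsimp
      omega
    · rw [Fin.sum_univ_four]
      dsimp
      omega

theorem omegaThreePairs_zero_sdiff_one (t : ℕ) :
    omegaThreePairs t 0 \ omegaThreePairs t 1 =
      (range (t / 2 + 1)).image fun j => (3 * j, t - 2 * j) := by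
  ext ⟨b, c⟩
  simp only [omegaThreePairs, mem_sdiff, mem_filter, mem_product, mem_range, mem_image,
    Prod.mk.injEq]
  constructor
  · rintro ⟨⟨_, h1, h2⟩, h3⟩
    exact ⟨b / 3, by omega, by omega, by omega⟩
  · rintro ⟨j, hj, rfl, rfl⟩
    omega

theorem omegaThreePairs_one_sdiff_zero (t : ℕ) :
    omegaThreePairs t 1 \ omegaThreePairs t 0 =
      (range ((t + 1) / 2)).image fun c => (t - 1 - 2 * c, c) := by
  ext ⟨b, c⟩
  simp only [omegaThreePairs, mem_sdiff, mem_filter, mem_product, mem_range, mem_image,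
    Prod.mk.injEq]
  constructor
  · rintro ⟨⟨_, h1, h2⟩, h3⟩
    exact ⟨c, by omega, by omega, rfl⟩
  · rintro ⟨c, hc, rfl, rfl⟩
    omega

theorem card_omegaThreePairs_zero_sub_one (t : ℕ) :
    ((omegaThreePairs t 0).card : ℤ) - (omegaThreePairs t 1).card =
      if Even t then 1 else 0 := by
  have h01 : (omegaThreePairs t 0 \ omegaThreePairs t 1).card = t / 2 + 1 := by
    rw [omegaThreePairs_zero_sdiff_one, card_image_of_injective _ fun i j h => by
      simp only [Prod.mk.injEq] at h; omega, card_range]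
  have h10 : (omegaThreePairs t 1 \ omegaThreePairs t 0).card = (t + 1) / 2 := by
    rw [omegaThreePairs_one_sdiff_zero, card_image_of_injective _ fun i j h => by
      simp only [Prod.mk.injEq] at h; omega, card_range]
  have h0 := card_sdiff_add_card_inter (omegaThreePairs t 0) (omegaThreePairs t 1)
  have h1 := card_sdiff_add_card_inter (omegaThreePairs t 1) (omegaThreePairs t 0)
  rw [inter_comm] at h1
  split_ifs with ht
  · obtain ⟨s, rfl⟩ := ht
    omega
  · obtain ⟨s, rfl⟩ := Nat.not_even_iff_odd.1 ht
    omega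

theorem omega_three_zero_sub_two (n : ℕ) :
    (omega 3 n 0 : ℤ) - omega 3 n 2 = if 4 ∣ n then 1 else 0 := by
  rcases Nat.even_or_odd' n with ⟨t, rfl | rfl⟩
  · have h0 : omega 3 (2 * t) 0 = (omegaThreePairs t 0).card := omega_three_two_mul t 0
    have h2 : omega 3 (2 * t) 2 = (omegaThreePairs t 1).card := omega_three_two_mul t 1
    rw [h0, h2, card_omegaThreePairs_zero_sub_one]
    simp only [Nat.even_iff, Nat.dvd_iff_mod_eq_zero]
    omega
  · rw [omega_eq_zero_of_odd ⟨3 * t + 1, by ring⟩, omega_eq_zero_of_odd ⟨3 * t + 2, by ring⟩,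
      if_neg (by omega)]
    rfl

theorem ite_four_dvd_eq_cos (n : ℕ) :
    (if 4 ∣ n then 1 else 0 : ℝ) =
      (1 / 4) * cos (π * n) + (1 / 2) * cos (π * n / 2) + 1 / 4 := by
  obtain ⟨q, r, hr, rfl⟩ : ∃ q r, r < 4 ∧ n = r + 4 * q := ⟨n / 4, n % 4, by omega, by omega⟩
  rw [show π * ↑(r + 4 * q) / 2 = π * r / 2 + (q : ℝ) * (2 * π) by push_cast; ring,
    show π * ↑(r + 4 * q) = π * r + ((2 * q : ℕ) : ℝ) * (2 * π) by push_cast; ring,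
    cos_add_nat_mul_two_pi, cos_add_nat_mul_two_pi]
  simp only [show 4 ∣ r + 4 * q ↔ r = 0 by omega]
  have cos_three_pi : cos (3 * π) = -1 := by
    rw [show 3 * π = π + 2 * π by ring, cos_add_two_pi, cos_pi]
  have cos_three_pi_div_two : cos (3 * π / 2) = 0 := by
    rw [show 3 * π / 2 = π / 2 + π by ring, cos_add_pi, cos_pi_div_two, neg_zero]
  interval_cases r <;> norm_num [cos_three_pi, cos_three_pi_div_two, mul_comm π]

/-- The Hilbert polynomial of the algebra of invariants of the binary form of degree 3. -/
theorem hilbert_polynomial_binary_form_deg_three (n : ℕ) :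
    (omega 3 n 0 : ℝ) - (omega 3 n 2 : ℝ) =
      (1 / 4) * Real.cos (π * n) + (1 / 2) * Real.cos (π * n / 2) + 1 / 4 := by
  rw [← ite_four_dvd_eq_cos]
  exact_mod_cast omega_three_zero_sub_two n
end

section
/- For every integer n ≥ 0, ω_4(n,0) − ω_4(n,2) = (1/6)·n + (1/4)·cos(πn) + (1/3)·cos(2πn/3) − (√3/9)·sin(2πn/3) + 5/12, where cos and sin are the real cosine and sine functions. -/
open Real

/-!
In the coordinates `(α₂, α₃, α₄)` the tuples counted by `ω₄(n, 2m)` are the lattice points of a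
polytope `R(n, m)` (`omegaFourRegion n m`). The polytopes `R(n, 0)` and `R(n, 1)` differ only
along one facet each: the first, after halving `α₃`, is the set of partitions of `n` into parts
`1, 2, 3`, and the second that of `n - 1`. So `ω₄(n, 0) - ω₄(n, 2)` counts the partitions of `n`
with no part `1`, i.e. into parts `2` and `3`; there are `⌊n / 6⌋ + [n ≢ 1 mod 6]` of them, and
the trigonometric expression takes exactly these values on each residue class mod `6`.
-/

theorem omega_four (n k : ℕ) :
    omega 4 n k = {α : Fin 5 → ℕ | 2 * (α 1 + 2 * α 2 + 3 * α 3 + 4 * α 4) + k = 4 * n ∧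
      α 0 + α 1 + α 2 + α 3 + α 4 = n}.ncard := by
  unfold omega
  congr! 3 with α
  simp [Fin.sum_univ_succ, add_assoc]

/-- For `k = 2m` the two equations defining `ω₄(n, k)` give
`α₁ = 2n - m - (2α₂ + 3α₃ + 4α₄)` and `α₀ = α₂ + 2α₃ + 3α₄ + m - n`. -/
def omegaFourRegion (n m : ℕ) : Set (ℕ × ℕ × ℕ) :=
  {p | 2 * p.1 + 3 * p.2.1 + 4 * p.2.2 + m ≤ 2 * n ∧ n ≤ p.1 + 2 * p.2.1 + 3 * p.2.2 + m}

theorem omega_four_two_mul (n m : ℕ) : omega 4 n (2 * m) = (omegaFourRegion n m).ncard := by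
  rw [omega_four]
  refine Set.ncard_congr (fun α _ => (α 2, α 3, α 4)) ?_ ?_ ?_
  · rintro α ⟨hw, hs⟩
    simp only [omegaFourRegion, Set.mem_ofPred_eq]
    omega
  · rintro α β ⟨hwα, hsα⟩ ⟨hwβ, hsβ⟩ h
    simp only [Prod.mk.injEq] at h
    funext i
    fin_cases i <;> dsimp only [Fin.zero_eta, Fin.mk_one, Fin.reduceFinMk] <;> omega
  · rintro ⟨x, y, z⟩ ⟨hw, hs⟩
    dsimp only at hw hs
    refine ⟨![x + 2 * y + 3 * z + m - n, 2 * n - (2 * x + 3 * y + 4 * z + m), x, y, z], ?_,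
      rfl⟩
    dsimp only [Set.mem_ofPred_eq, Matrix.cons_val_zero, Matrix.cons_val_one, Matrix.cons_val]
    omega

theorem omegaFourRegion_subset_Iic (n m : ℕ) : omegaFourRegion n m ⊆ Set.Iic (n, n, n) := by
  rintro ⟨x, y, z⟩ ⟨hw, -⟩
  dsimp only at hw
  simp only [Set.mem_Iic, Prod.mk_le_mk]
  omega

theorem omegaFourRegion_zero_sdiff_one (n : ℕ) :
    omegaFourRegion n 0 \ omegaFourRegion n 1 =
      {p | 2 * p.1 + 3 * p.2.1 + 4 * p.2.2 = 2 * n} := by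
  ext ⟨x, y, z⟩
  simp only [omegaFourRegion, Set.mem_sdiff, Set.mem_ofPred_eq]
  omega

def partitionsOneTwoThree (n : ℕ) : Set (ℕ × ℕ × ℕ) :=
  {p | p.1 + 2 * p.2.1 + 3 * p.2.2 = n}

def partitionsTwoThree (n : ℕ) : Set (ℕ × ℕ) :=
  {q | 2 * q.1 + 3 * q.2 = n}

theorem omegaFourRegion_one_sdiff_zero (n : ℕ) :
    omegaFourRegion n 1 \ omegaFourRegion n 0 =
      Prod.map (· + 1) id ⁻¹' partitionsOneTwoThree n := by
  ext ⟨x, y, z⟩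
  simp only [omegaFourRegion, partitionsOneTwoThree, Set.mem_sdiff, Set.mem_ofPred_eq,
    Set.mem_preimage, Prod.map_fst, Prod.map_snd, id]
  omega

theorem partitionsOneTwoThree_subset_Iic (n : ℕ) :
    partitionsOneTwoThree n ⊆ Set.Iic (n, n, n) := by
  rintro ⟨x, y, z⟩ h
  simp only [partitionsOneTwoThree, Set.mem_ofPred_eq] at h
  simp only [Set.mem_Iic, Prod.mk_le_mk]
  omega

theorem ncard_two_three_four_eq_ncard_partitionsOneTwoThree (n : ℕ) :
    {p : ℕ × ℕ × ℕ | 2 * p.1 + 3 * p.2.1 + 4 * p.2.2 = 2 * n}.ncard =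
      (partitionsOneTwoThree n).ncard := by
  refine Set.ncard_congr (fun p _ => (p.1, p.2.2, p.2.1 / 2)) ?_ ?_ ?_
  · rintro ⟨x, y, z⟩ h
    simp only [partitionsOneTwoThree, Set.mem_ofPred_eq] at h ⊢
    omega
  · rintro ⟨x, y, z⟩ ⟨x', y', z'⟩ h h' heq
    simp only [Set.mem_ofPred_eq, Prod.mk.injEq] at h h' heq ⊢
    omega
  · rintro ⟨x, z, b⟩ h
    simp only [partitionsOneTwoThree, Set.mem_ofPred_eq] at h
    exact ⟨(x, 2 * b, z), by simp only [Set.mem_ofPred_eq]; omega, by simp⟩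

theorem ncard_partitionsOneTwoThree (n : ℕ) :
    (partitionsOneTwoThree n).ncard =
      (Prod.map (· + 1) id ⁻¹' partitionsOneTwoThree n).ncard +
        (partitionsTwoThree n).ncard := by
  have hfin := (Set.finite_Iic (n, n, n)).subset (partitionsOneTwoThree_subset_Iic n)
  rw [← Set.ncard_inter_add_ncard_sdiff_eq_ncard _ {p | p.1 = 0} hfin, add_comm]
  congr 1
  · refine Set.ncard_congr (fun p _ => (p.1 - 1, p.2)) ?_ ?_ ?_
    · rintro ⟨x, y, z⟩ ⟨h, h0⟩
      simp only [partitionsOneTwoThree, Set.mem_ofPred_eq, Set.mem_preimage, Prod.map_fst,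
        Prod.map_snd, id] at h h0 ⊢
      omega
    · rintro ⟨x, y, z⟩ ⟨x', y', z'⟩ ⟨-, h0⟩ ⟨-, h0'⟩ heq
      simp only [Set.mem_ofPred_eq, Prod.mk.injEq] at h0 h0' heq ⊢
      omega
    · rintro ⟨x, y, z⟩ h
      exact ⟨(x + 1, y, z), ⟨h, by simp⟩, by simp⟩
  · refine Set.ncard_congr (fun p _ => p.2) ?_ ?_ ?_
    · rintro ⟨x, y, z⟩ ⟨h, h0⟩
      simp only [partitionsOneTwoThree, partitionsTwoThree, Set.mem_ofPred_eq] at h h0 ⊢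
      omega
    · rintro ⟨x, y, z⟩ ⟨x', y', z'⟩ ⟨-, h0⟩ ⟨-, h0'⟩ heq
      simp only [Set.mem_ofPred_eq, Prod.mk.injEq] at h0 h0' heq ⊢
      omega
    · rintro ⟨y, z⟩ h
      simp only [partitionsTwoThree, Set.mem_ofPred_eq] at h
      refine ⟨(0, y, z), ⟨?_, rfl⟩, rfl⟩
      simp only [partitionsOneTwoThree, Set.mem_ofPred_eq]
      omega

theorem ncard_partitionsTwoThree (n : ℕ) :
    (partitionsTwoThree n).ncard = n / 6 + if n % 6 = 1 then 0 else 1 := by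
  rw [← Set.ncard_Iio_nat (n / 6 + if n % 6 = 1 then 0 else 1)]
  -- a solution `(a, b)` has `b = n % 2 + 2t` with `6t + 3 (n % 2) ≤ n`
  refine Set.ncard_congr (fun q _ => q.2 / 2) ?_ ?_ ?_
  · rintro ⟨a, b⟩ h
    simp only [partitionsTwoThree, Set.mem_ofPred_eq, Set.mem_Iio] at h ⊢
    split_ifs <;> omega
  · rintro ⟨a, b⟩ ⟨a', b'⟩ h h' heq
    simp only [partitionsTwoThree, Set.mem_ofPred_eq, Prod.mk.injEq] at h h' heq ⊢
    omega
  · intro t ht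
    simp only [Set.mem_Iio] at ht
    refine ⟨((n - 3 * (n % 2)) / 2 - 3 * t, n % 2 + 2 * t), ?_, by dsimp only; omega⟩
    simp only [partitionsTwoThree, Set.mem_ofPred_eq]
    split_ifs at ht <;> omega

theorem omega_four_zero_eq_omega_four_two_add (n : ℕ) :
    omega 4 n 0 = omega 4 n 2 + (partitionsTwoThree n).ncard := by
  have hfin (m : ℕ) : (omegaFourRegion n m).Finite :=
    (Set.finite_Iic _).subset (omegaFourRegion_subset_Iic n m)
  have h₀₁ := Set.ncard_sdiff_add_ncard _ _ (hfin 0) (hfin 1)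
  have h₁₀ := Set.ncard_sdiff_add_ncard _ _ (hfin 1) (hfin 0)
  rw [Set.union_comm, ← h₁₀, omegaFourRegion_zero_sdiff_one,
    ncard_two_three_four_eq_ncard_partitionsOneTwoThree, ncard_partitionsOneTwoThree,
    ← omegaFourRegion_one_sdiff_zero] at h₀₁
  rw [omega_four_two_mul n 0, omega_four_two_mul n 1]
  omega

theorem cos_pi_mul_natCast (n : ℕ) : cos (π * n) = (-1) ^ n := by
  rw [mul_comm, cos_nat_mul_pi]

theorem two_pi_mul_natCast_div_three (n : ℕ) :
    2 * π * n / 3 = 2 * π * (n % 3 : ℕ) / 3 + (n / 3 : ℕ) * (2 * π) := by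
  have hn : (n : ℝ) = (n % 3 : ℕ) + 3 * (n / 3 : ℕ) := by
    exact_mod_cast (Nat.mod_add_div n 3).symm
  rw [hn]
  ring

theorem cos_two_pi_mul_natCast_div_three (n : ℕ) :
    cos (2 * π * n / 3) = if n % 3 = 0 then 1 else -(1 / 2) := by
  rw [two_pi_mul_natCast_div_three, cos_add_nat_mul_two_pi]
  obtain h | h | h : n % 3 = 0 ∨ n % 3 = 1 ∨ n % 3 = 2 := by omega
  · simp [h]
  · rw [h, show 2 * π * ((1 : ℕ) : ℝ) / 3 = π - π / 3 by push_cast; ring, cos_pi_sub,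
      cos_pi_div_three]
    simp
  · rw [h, show 2 * π * ((2 : ℕ) : ℝ) / 3 = π / 3 + π by push_cast; ring, cos_add_pi,
      cos_pi_div_three]
    simp

theorem sin_two_pi_mul_natCast_div_three (n : ℕ) :
    sin (2 * π * n / 3) =
      if n % 3 = 0 then 0 else if n % 3 = 1 then √3 / 2 else -(√3 / 2) := by
  rw [two_pi_mul_natCast_div_three, sin_add_nat_mul_two_pi]
  obtain h | h | h : n % 3 = 0 ∨ n % 3 = 1 ∨ n % 3 = 2 := by omega
  · simp [h]
  · rw [h, show 2 * π * ((1 : ℕ) : ℝ) / 3 = π - π / 3 by push_cast; ring, sin_pi_sub,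
      sin_pi_div_three]
    simp
  · rw [h, show 2 * π * ((2 : ℕ) : ℝ) / 3 = π / 3 + π by push_cast; ring, sin_add_pi,
      sin_pi_div_three]
    simp

/-- The Hilbert polynomial of the algebra of invariants of the binary form of degree 4. -/
theorem hilbert_polynomial_binary_form_deg_four (n : ℕ) :
    (omega 4 n 0 : ℝ) - (omega 4 n 2 : ℝ) =
      (1 / 6) * n + (1 / 4) * Real.cos (π * n) + (1 / 3) * Real.cos (2 * π * n / 3)
        - (Real.sqrt 3 / 9) * Real.sin (2 * π * n / 3) + 5 / 12 := by
  have hn : (n : ℝ) = 6 * (n / 6 : ℕ) + (n % 6 : ℕ) := by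
    exact_mod_cast (Nat.div_add_mod n 6).symm
  rw [omega_four_zero_eq_omega_four_two_add, Nat.cast_add, add_sub_cancel_left,
    ncard_partitionsTwoThree, cos_pi_mul_natCast, cos_two_pi_mul_natCast_div_three,
    sin_two_pi_mul_natCast_div_three, neg_one_pow_eq_pow_mod_two,
    ← Nat.mod_mod_of_dvd n (by norm_num : 2 ∣ 6), ← Nat.mod_mod_of_dvd n (by norm_num : 3 ∣ 6),
    hn]
  obtain h | h | h | h | h | h :
      n % 6 = 0 ∨ n % 6 = 1 ∨ n % 6 = 2 ∨ n % 6 = 3 ∨ n % 6 = 4 ∨ n % 6 = 5 := by omega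
  all_goals
    norm_num [h]
    linarith [sq_sqrt (show (0 : ℝ) ≤ 3 by norm_num)]
end

section
/- Let a : ℕ → ℚ be the sequence of coefficients of the formal power series expansion of R(z)/Q(z), i.e. Q(z) · (Σ_{n≥0} a_n z^n) = R(z) in ℚ[[z]], where R(z) = z⁶ − z⁵ + z⁴ − z³ + z² − z + 1 and Q(z) = (1−z³)(1−z⁵)(1−z+z²−z³)(1−z²). Then for every integer n ≥ 0, a_n = (1/360)·n³ + (7/240)·n² + (1/6)·n + (1/10)·cos(2πn/5) − (1/50)·√5·cos(2πn/5) + (1/50)·√(50+10√5)·sin(2πn/5) + (1/10)·cos(4πn/5) + (√5/50)·cos(4πn/5) + (1/8)·cos(πn/2) − (1/25)·√(10−2√5)·sin(4πn/5) + (1/9)·cos(2πn/3) + (1/27)·√3·sin(2πn/3) − (1/8)·sin(πn/2) + (7/32)·cos(πn) − (1/25)·√(10+2√5)·sin(2πn/5) − (1/50)·√5·√(10−2√5)·sin(4πn/5) + 497/1440, where cos and sin are the real cosine and sine functions and √ denotes the real square root (the real number on the right-hand side is in fact rational and equals a_n). -/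
/-!
Since `Q(0) = 1`, the expansion of `R/Q` is the only power series `f` with `Q f = R`. The closed
form comes from partial fractions: `1440 a_n = 24 C(n+3,3) + 36 C(n+2,2) + 142 C(n+1,1) + 295`
plus periodic sequences of periods 5, 4, 3, 2. The sequence `C(n+k,k)` has generating function
`1/(1-z)^(k+1)` and an `m`-periodic one has generating function `S(z)/(1-z^m)` with `deg S < m`,
so `Q f = R` becomes a polynomial identity. The trigonometric terms of each frequency are periodic
in `n`, so it is enough to compare them with the periodic sequences for `n` below the period.
-/

open Real Polynomial

/-- The numerator `R(z) = z⁶ − z⁵ + z⁴ − z³ + z² − z + 1` of the Poincaré series of `I_{2,3}`. -/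
noncomputable def Rpoly : Polynomial ℚ :=
  X ^ 6 - X ^ 5 + X ^ 4 - X ^ 3 + X ^ 2 - X + 1

/-- The denominator `Q(z) = (1−z³)(1−z⁵)(1−z+z²−z³)(1−z²)` of the Poincaré series of `I_{2,3}`. -/
noncomputable def Qpoly : Polynomial ℚ :=
  (1 - X ^ 3) * (1 - X ^ 5) * (1 - X + X ^ 2 - X ^ 3) * (1 - X ^ 2)

open scoped PowerSeries

theorem PowerSeries.one_sub_X_pow_mul_mk_of_periodic {R : Type*} [CommRing R] {f : ℕ → R}
    {m : ℕ} (hf : Function.Periodic f m) :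
    (1 - X ^ m) * mk f = ∑ r ∈ Finset.range m, monomial r (f r) := by
  ext n
  rw [sub_mul, one_mul, map_sub, coeff_X_pow_mul', map_sum]
  simp only [coeff_mk, coeff_monomial, Finset.sum_ite_eq, Finset.mem_range]
  split_ifs with hmn
  · omega
  · rw [← hf (n - m), Nat.sub_add_cancel hmn, sub_self]
  · rw [sub_zero]
  · omega

theorem Function.Periodic.eq_of_forall_lt {α : Type*} {f g : ℕ → α} {m : ℕ}
    (hf : Function.Periodic f m) (hg : Function.Periodic g m) (hm : 0 < m)
    (h : ∀ r < m, f r = g r) : f = g :=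
  funext fun n => by rw [← hf.map_mod_nat, ← hg.map_mod_nat]; exact h _ (Nat.mod_lt _ hm)

def wave5 (n : ℕ) : ℚ :=
  match n % 5 with
  | 0 => 1 | 1 => -1 | 2 => 1 | 3 => -1 | _ => 0

def wave4 (n : ℕ) : ℚ :=
  match n % 4 with
  | 0 => 1 | 1 => -1 | 2 => -1 | _ => 1

def wave3 (n : ℕ) : ℚ :=
  match n % 3 with
  | 0 => 1 | 1 => 0 | _ => -1

def wave2 (n : ℕ) : ℚ :=
  match n % 2 with
  | 0 => 1 | _ => -1

lemma wave5_periodic : Function.Periodic wave5 5 := fun n => by simp [wave5]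
lemma wave4_periodic : Function.Periodic wave4 4 := fun n => by simp [wave4]
lemma wave3_periodic : Function.Periodic wave3 3 := fun n => by simp [wave3]
lemma wave2_periodic : Function.Periodic wave2 2 := fun n => by simp [wave2]

def scaledHilbertFunction (n : ℕ) : ℚ :=
  24 * (3 + n).choose 3 + 36 * (2 + n).choose 2 + 142 * (1 + n).choose 1 + 295 * (0 + n).choose 0
    + 288 * wave5 n + 180 * wave4 n + 160 * wave3 n + 315 * wave2 n

open PowerSeries in
lemma Qpoly_mul_mk_scaledHilbertFunction :
    (Qpoly : ℚ⟦X⟧) * mk scaledHilbertFunction = 1440 * (Rpoly : ℚ⟦X⟧) := by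
  have hmk : mk scaledHilbertFunction =
      24 * mk (fun n => ((3 + n).choose 3 : ℚ)) + 36 * mk (fun n => ((2 + n).choose 2 : ℚ))
        + 142 * mk (fun n => ((1 + n).choose 1 : ℚ))
        + 295 * mk (fun n => ((0 + n).choose 0 : ℚ))
        + 288 * mk wave5 + 180 * mk wave4 + 160 * mk wave3 + 315 * mk wave2 := by
    ext n
    simp only [scaledHilbertFunction, coeff_mk, map_add, ← map_ofNat (PowerSeries.C (R := ℚ)),
      PowerSeries.coeff_C_mul]
  have h3 := mk_add_choose_mul_one_sub_pow_eq_one (S := ℚ) 3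
  have h2 := mk_add_choose_mul_one_sub_pow_eq_one (S := ℚ) 2
  have h1 := mk_add_choose_mul_one_sub_pow_eq_one (S := ℚ) 1
  have h0 := mk_add_choose_mul_one_sub_pow_eq_one (S := ℚ) 0
  have e5 := one_sub_X_pow_mul_mk_of_periodic wave5_periodic
  have e4 := one_sub_X_pow_mul_mk_of_periodic wave4_periodic
  have e3 := one_sub_X_pow_mul_mk_of_periodic wave3_periodic
  have e2 := one_sub_X_pow_mul_mk_of_periodic wave2_periodic
  simp only [Finset.sum_range_succ, Finset.sum_range_zero, monomial_eq_C_mul_X_pow] at e5 e4 e3 e2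
  norm_num [wave5, wave4, wave3, wave2] at e5 e4 e3 e2
  rw [hmk, Qpoly, Rpoly]
  push_cast
  generalize (PowerSeries.X : ℚ⟦X⟧) = x at *
  linear_combination
    (1 + x + x ^ 2) * (1 + x + x ^ 2 + x ^ 3 + x ^ 4) * (1 + x ^ 2) * (1 + x) *
      (24 * h3 + 36 * (1 - x) * h2 + 142 * (1 - x) ^ 2 * h1 + 295 * (1 - x) ^ 3 * h0)
    + 288 * (1 - x ^ 3) * (1 - x + x ^ 2 - x ^ 3) * (1 - x ^ 2) * e5
    + 180 * (1 - x ^ 3) * (1 - x ^ 5) * (1 - x) * e4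
    + 160 * (1 - x ^ 5) * (1 - x + x ^ 2 - x ^ 3) * (1 - x ^ 2) * e3
    + 315 * (1 - x ^ 3) * (1 - x ^ 5) * (1 - x + x ^ 2 - x ^ 3) * e2

lemma scaledHilbertFunction_eq (n : ℕ) :
    scaledHilbertFunction n = 4 * n ^ 3 + 42 * n ^ 2 + 240 * n + 497
      + 288 * wave5 n + 180 * wave4 n + 160 * wave3 n + 315 * wave2 n := by
  have hchoose : (24 * (3 + n).choose 3 + 36 * (2 + n).choose 2 + 142 * (1 + n).choose 1
      + 295 * (0 + n).choose 0 : ℚ) = 4 * n ^ 3 + 42 * n ^ 2 + 240 * n + 497 := by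
    simp only [Nat.cast_add_choose, zero_add, Nat.choose_zero_right]
    rw [show 3 + n = n + 1 + 1 + 1 by ring, show 2 + n = n + 1 + 1 by ring,
      show 1 + n = n + 1 by ring]
    simp only [Nat.factorial_succ]
    push_cast
    field_simp
    ring
  rw [scaledHilbertFunction, hchoose]

lemma eq_scaledHilbertFunction_div {a : ℕ → ℚ}
    (ha : (Qpoly : ℚ⟦X⟧) * PowerSeries.mk a = (Rpoly : ℚ⟦X⟧)) (n : ℕ) :
    a n = scaledHilbertFunction n / 1440 := by
  have hQ : (Qpoly : ℚ⟦X⟧) ≠ 0 := fun h => by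
    simpa [Qpoly] using congrArg PowerSeries.constantCoeff h
  have hmk : PowerSeries.C 1440 * PowerSeries.mk a = PowerSeries.mk scaledHilbertFunction := by
    apply mul_left_cancel₀ hQ
    rw [Qpoly_mul_mk_scaledHilbertFunction, mul_left_comm, ha, map_ofNat]
  have := congrArg (PowerSeries.coeff n) hmk
  rw [PowerSeries.coeff_C_mul, PowerSeries.coeff_mk, PowerSeries.coeff_mk] at this
  rw [← this]
  ring

namespace Real

lemma sqrt_five_sq : √5 ^ 2 = 5 := sq_sqrt (by norm_num)

lemma sqrt_fifty_add_ten_sqrt_five : √(50 + 10 * √5) = √5 * √(10 + 2 * √5) := by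
  rw [← sqrt_mul (by norm_num)]
  ring_nf

lemma sqrt_ten_add_two_sqrt_five_mul_sqrt_ten_sub_two_sqrt_five :
    √(10 + 2 * √5) * √(10 - 2 * √5) = 4 * √5 := by
  rw [← sqrt_mul (by positivity), ← sqrt_sq (by positivity : (0 : ℝ) ≤ 4 * √5)]
  congr 1
  linear_combination -20 * sqrt_five_sq

lemma cos_two_pi_div_five : cos (2 * π / 5) = (√5 - 1) / 4 := by
  rw [show 2 * π / 5 = 2 * (π / 5) by ring, cos_two_mul, cos_pi_div_five]
  linear_combination sqrt_five_sq / 8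

lemma cos_four_pi_div_five : cos (4 * π / 5) = -(1 + √5) / 4 := by
  rw [show 4 * π / 5 = 2 * (2 * π / 5) by ring, cos_two_mul, cos_two_pi_div_five]
  linear_combination sqrt_five_sq / 8

lemma sin_two_pi_div_five : sin (2 * π / 5) = √(10 + 2 * √5) / 4 := by
  rw [sin_eq_sqrt_one_sub_cos_sq (by positivity) (by linarith [pi_pos]), cos_two_pi_div_five,
    show 1 - ((√5 - 1) / 4) ^ 2 = (10 + 2 * √5) / 4 ^ 2 by
      linear_combination -sqrt_five_sq / 16,
    sqrt_div' _ (by norm_num), sqrt_sq (by norm_num)]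

lemma sin_four_pi_div_five : sin (4 * π / 5) = √(10 - 2 * √5) / 4 := by
  rw [sin_eq_sqrt_one_sub_cos_sq (by positivity) (by linarith [pi_pos]), cos_four_pi_div_five,
    show 1 - (-(1 + √5) / 4) ^ 2 = (10 - 2 * √5) / 4 ^ 2 by
      linear_combination -sqrt_five_sq / 16,
    sqrt_div' _ (by norm_num), sqrt_sq (by norm_num)]

lemma cos_two_pi_div_three : cos (2 * π / 3) = -(1 / 2) := by
  rw [show 2 * π / 3 = π - π / 3 by ring, cos_pi_sub, cos_pi_div_three]

lemma sin_two_pi_div_three : sin (2 * π / 3) = √3 / 2 := by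
  rw [show 2 * π / 3 = π - π / 3 by ring, sin_pi_sub, sin_pi_div_three]

end Real

lemma trig_period_five_eq_wave5 :
    (fun n : ℕ => (1 / 10) * cos (2 * π * n / 5)
      - (1 / 50) * √5 * cos (2 * π * n / 5)
      + (1 / 50) * √(50 + 10 * √5) * sin (2 * π * n / 5)
      + (1 / 10) * cos (4 * π * n / 5)
      + (√5 / 50) * cos (4 * π * n / 5)
      - (1 / 25) * √(10 - 2 * √5) * sin (4 * π * n / 5)
      - (1 / 25) * √(10 + 2 * √5) * sin (2 * π * n / 5)
      - (1 / 50) * √5 * √(10 - 2 * √5) * sin (4 * π * n / 5))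
      = fun n => (wave5 n : ℝ) / 5 := by
  refine Function.Periodic.eq_of_forall_lt (m := 5) (fun n => ?_)
    (fun n => by simp only [wave5_periodic n]) (by norm_num) ?_
  · simp only [Nat.cast_add, Nat.cast_ofNat]
    rw [show 2 * π * (n + 5 : ℝ) / 5 = 2 * π * n / 5 + 2 * π by ring,
      show 4 * π * (n + 5 : ℝ) / 5 = 4 * π * n / 5 + 2 * π + 2 * π by ring]
    simp only [cos_add_two_pi, sin_add_two_pi]
  have h5 : √5 ^ 2 = 5 := sqrt_five_sq
  have hu : √(10 + 2 * √5) ^ 2 = 10 + 2 * √5 := sq_sqrt (by positivity)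
  have hv : √(10 - 2 * √5) ^ 2 = 10 - 2 * √5 := sq_sqrt (by nlinarith [sqrt_nonneg 5])
  have huv := sqrt_ten_add_two_sqrt_five_mul_sqrt_ten_sub_two_sqrt_five
  intro r hr
  simp only [sqrt_fifty_add_ten_sqrt_five]
  interval_cases r
  · norm_num [wave5]
    ring
  · norm_num [wave5, cos_two_pi_div_five, sin_two_pi_div_five, cos_four_pi_div_five,
      sin_four_pi_div_five]
    linear_combination (-1 / 100 + √5 / 200) * hu + (-1 / 100 - √5 / 200) * hv + h5 / 100
  · rw [show 2 * π * ((2 : ℕ) : ℝ) / 5 = 4 * π / 5 by push_cast; ring,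
      show 4 * π * ((2 : ℕ) : ℝ) / 5 = 2 * π - 2 * π / 5 by push_cast; ring]
    norm_num [wave5, cos_two_pi_sub, sin_two_pi_sub, cos_two_pi_div_five, sin_two_pi_div_five,
      cos_four_pi_div_five, sin_four_pi_div_five]
    linear_combination h5 / 20 + √5 / 100 * huv
  · rw [show 2 * π * ((3 : ℕ) : ℝ) / 5 = 2 * π - 4 * π / 5 by push_cast; ring,
      show 4 * π * ((3 : ℕ) : ℝ) / 5 = 2 * π / 5 + 2 * π by push_cast; ring]
    norm_num [wave5, cos_two_pi_sub, sin_two_pi_sub, cos_add_two_pi, sin_add_two_pi,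
      cos_two_pi_div_five, sin_two_pi_div_five, cos_four_pi_div_five, sin_four_pi_div_five]
    linear_combination -3 * h5 / 100 - √5 / 100 * huv
  · rw [show 2 * π * ((4 : ℕ) : ℝ) / 5 = 2 * π - 2 * π / 5 by push_cast; ring,
      show 4 * π * ((4 : ℕ) : ℝ) / 5 = 2 * π - 4 * π / 5 + 2 * π by push_cast; ring]
    norm_num [wave5, cos_two_pi_sub, sin_two_pi_sub, cos_add_two_pi, sin_add_two_pi,
      cos_two_pi_div_five, sin_two_pi_div_five, cos_four_pi_div_five, sin_four_pi_div_five]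
    linear_combination (1 / 100 - √5 / 200) * hu + (1 / 100 + √5 / 200) * hv - 3 * h5 / 100

lemma trig_period_four_eq_wave4 :
    (fun n : ℕ => (1 / 8) * cos (π * n / 2) - (1 / 8) * sin (π * n / 2))
      = fun n => (wave4 n : ℝ) / 8 := by
  refine Function.Periodic.eq_of_forall_lt (m := 4) (fun n => ?_)
    (fun n => by simp only [wave4_periodic n]) (by norm_num) ?_
  · simp only [Nat.cast_add, Nat.cast_ofNat]
    rw [show π * (n + 4 : ℝ) / 2 = π * n / 2 + 2 * π by ring, cos_add_two_pi, sin_add_two_pi]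
  intro r hr
  interval_cases r <;>
    norm_num [wave4, show π * 3 / 2 = π / 2 + π by ring, cos_add_pi, sin_add_pi]

lemma trig_period_three_eq_wave3 :
    (fun n : ℕ => (1 / 9) * cos (2 * π * n / 3) + (1 / 27) * √3 * sin (2 * π * n / 3))
      = fun n => (wave3 n : ℝ) / 9 := by
  refine Function.Periodic.eq_of_forall_lt (m := 3) (fun n => ?_)
    (fun n => by simp only [wave3_periodic n]) (by norm_num) ?_
  · simp only [Nat.cast_add, Nat.cast_ofNat]
    rw [show 2 * π * (n + 3 : ℝ) / 3 = 2 * π * n / 3 + 2 * π by ring, cos_add_two_pi,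
      sin_add_two_pi]
  have h3 : √3 ^ 2 = 3 := sq_sqrt (by norm_num)
  intro r hr
  interval_cases r
  · norm_num [wave3]
  · norm_num [wave3, cos_two_pi_div_three, sin_two_pi_div_three]
    linear_combination h3 / 54
  · rw [show 2 * π * ((2 : ℕ) : ℝ) / 3 = 2 * π - 2 * π / 3 by push_cast; ring]
    norm_num [wave3, cos_two_pi_sub, sin_two_pi_sub, cos_two_pi_div_three, sin_two_pi_div_three]
    linear_combination -h3 / 54

lemma trig_period_two_eq_wave2 :
    (fun n : ℕ => (7 / 32) * cos (π * n)) = fun n => 7 * (wave2 n : ℝ) / 32 := by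
  refine Function.Periodic.eq_of_forall_lt (m := 2) (fun n => ?_)
    (fun n => by simp only [wave2_periodic n]) (by norm_num) ?_
  · simp only [Nat.cast_add, Nat.cast_ofNat]
    rw [show π * (n + 2 : ℝ) = π * n + 2 * π by ring, cos_add_two_pi]
  intro r hr
  interval_cases r <;> norm_num [wave2]

/-- The Hilbert quasi-polynomial of the algebra `I_{2,3}` of joint invariants of two
binary forms of degrees 2 and 3: if `a : ℕ → ℚ` is the coefficient sequence of the
power series expansion of `R(z)/Q(z)`, then `a n` is given by the stated
quasi-polynomial expression in `n`. -/
theorem hilbert_polynomial_I_two_three (a : ℕ → ℚ)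
    (ha : (Qpoly : PowerSeries ℚ) * PowerSeries.mk a = (Rpoly : PowerSeries ℚ)) (n : ℕ) :
    (a n : ℝ) =
      (1 / 360) * n ^ 3 + (7 / 240) * n ^ 2 + (1 / 6) * n
        + (1 / 10) * Real.cos (2 * π * n / 5)
        - (1 / 50) * Real.sqrt 5 * Real.cos (2 * π * n / 5)
        + (1 / 50) * Real.sqrt (50 + 10 * Real.sqrt 5) * Real.sin (2 * π * n / 5)
        + (1 / 10) * Real.cos (4 * π * n / 5)
        + (Real.sqrt 5 / 50) * Real.cos (4 * π * n / 5)
        + (1 / 8) * Real.cos (π * n / 2)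
        - (1 / 25) * Real.sqrt (10 - 2 * Real.sqrt 5) * Real.sin (4 * π * n / 5)
        + (1 / 9) * Real.cos (2 * π * n / 3)
        + (1 / 27) * Real.sqrt 3 * Real.sin (2 * π * n / 3)
        - (1 / 8) * Real.sin (π * n / 2)
        + (7 / 32) * Real.cos (π * n)
        - (1 / 25) * Real.sqrt (10 + 2 * Real.sqrt 5) * Real.sin (2 * π * n / 5)
        - (1 / 50) * Real.sqrt 5 * Real.sqrt (10 - 2 * Real.sqrt 5) * Real.sin (4 * π * n / 5)
        + 497 / 1440 := by
  have h5 := congrFun trig_period_five_eq_wave5 n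
  have h4 := congrFun trig_period_four_eq_wave4 n
  have h3 := congrFun trig_period_three_eq_wave3 n
  have h2 := congrFun trig_period_two_eq_wave2 n
  beta_reduce at h5 h4 h3 h2
  rw [eq_scaledHilbertFunction_div ha n, scaledHilbertFunction_eq]
  push_cast
  linear_combination -(h5 + h4 + h3 + h2)
end
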